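/- S-lemma (S-procedure): Let f(u) = uᵀA u + 2aᵀu + α and g(u) = uᵀB u + 2bᵀu + β be quadratic functions with some ū satisfying g(ū) > 0. Then f(u) ≥ 0 for all u with g(u) ≥ 0 if and only if there exists l ≥ 0 such that the block matrix [[A − lB, a − lb], [(a − lb)ᵀ, α − lβ]] is positive semidefinite. -/

import Mathlib

/-!
Homogenize: by Slater's condition, `f ≥ 0` on `{g ≥ 0}` is equivalent to `F ≥ 0` on `{G ≥ 0}`
for the quadratic forms `F, G` on `ℝᵐ × ℝ` given by the bordered matrices (points with last
coordinate `0` are reached by perturbing towards a Slater point). By Dines' theorem the joint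
range `{(F z, G z)}` is convex; it misses the open quadrant `{x < 0 < y}`, and a separating line
yields `c₁ F + c₂ G ≥ 0` with `c₂ ≤ 0 < c₁`, i.e. `F - l G ⪰ 0` for `l = -c₂ / c₁ ≥ 0`.

Dines' theorem: the joint range of two quadratic forms is a cone, so it suffices that it is
closed under addition. Rotating a pair `(u, v)` in its own plane preserves `Q u + Q v`, and an
intermediate value argument finds a rotation after which both rotated vectors have joint values
parallel to the sum; one of the two is then a positive multiple of it.
-/

open Matrix Real Set Filter Topology

theorem nonneg_of_forall_pos_add_mul_add_mul_sq_nonneg {a b c : ℝ}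
    (h : ∀ ε > 0, 0 ≤ a + b * ε + c * ε ^ 2) : 0 ≤ a := by
  have hlim : Tendsto (fun ε => a + b * ε + c * ε ^ 2) (𝓝[>] 0) (𝓝 a) := by
    have : Continuous fun ε : ℝ => a + b * ε + c * ε ^ 2 := by fun_prop
    simpa using (this.tendsto 0).mono_left nhdsWithin_le_nhds
  exact ge_of_tendsto hlim (eventually_nhdsWithin_of_forall h)

theorem Prod.exists_pos_smul_eq_of_cross_eq_zero {c y : ℝ × ℝ} (hcross : c.1 * y.2 = c.2 * y.1)
    (hinner : 0 < c.1 * y.1 + c.2 * y.2) : ∃ μ : ℝ, 0 < μ ∧ μ • y = c := by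
  have hc : 0 < c.1 ^ 2 + c.2 ^ 2 := by
    by_contra! h
    nlinarith [sq_nonneg c.1, sq_nonneg c.2, sq_nonneg (c.1 - y.1), sq_nonneg (c.2 - y.2)]
  refine ⟨(c.1 ^ 2 + c.2 ^ 2) / (c.1 * y.1 + c.2 * y.2), by positivity, ?_⟩
  ext <;> simp only [Prod.smul_fst, Prod.smul_snd, smul_eq_mul] <;> field_simp
  · linear_combination -c.2 * hcross
  · linear_combination c.1 * hcross

theorem Convex.exists_nonneg_mul_snd_le_fst {K : Set (ℝ × ℝ)} (hK : Convex ℝ K)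
    (h0 : (0 : ℝ × ℝ) ∈ K) (hslater : ∃ k ∈ K, 0 < k.2) (h : ∀ k ∈ K, 0 < k.2 → 0 ≤ k.1) :
    ∃ l : ℝ, 0 ≤ l ∧ ∀ k ∈ K, l * k.2 ≤ k.1 := by
  have hdisj : Disjoint (Iio 0 ×ˢ Ioi 0) K :=
    disjoint_left.mpr fun k ⟨hk₁, hk₂⟩ hk => (h k hk hk₂).not_gt hk₁
  obtain ⟨f, σ, hfC, hfK⟩ := geometric_hahn_banach_open ((convex_Iio 0).prod (convex_Ioi 0))
    (isOpen_Iio.prod isOpen_Ioi) hK hdisj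
  obtain ⟨c₁, c₂, hf⟩ : ∃ c₁ c₂ : ℝ, ∀ p : ℝ × ℝ, f p = p.1 * c₁ + p.2 * c₂ := by
    refine ⟨f (1, 0), f (0, 1), fun ⟨s, t⟩ => ?_⟩
    conv_lhs => rw [show ((s, t) : ℝ × ℝ) = s • (1, 0) + t • (0, 1) by simp, map_add,
      map_smul, map_smul]
    rfl
  have hfC' : ∀ p ∈ Iic 0 ×ˢ Ici 0, f p ≤ σ := by
    rw [← closure_Iio, ← closure_Ioi, ← closure_prod_eq]
    exact closure_minimal (fun p hp => (hfC p hp).le) (isClosed_le f.continuous continuous_const)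
  simp only [hf] at hfC hfC' hfK
  obtain rfl : σ = 0 := le_antisymm (by simpa using hfK 0 h0) (by simpa using hfC' 0 (by simp))
  have hc₁ : 0 ≤ c₁ := by simpa using hfC' (-1, 0) (by simp)
  have hc₂ : c₂ ≤ 0 := by simpa using hfC' (0, 1) (by simp)
  have hc₁₂ : c₂ < c₁ := by simpa using hfC (-1, 1) (by simp)
  obtain ⟨k₀, hk₀, hk₀₂⟩ := hslater
  have hc₁_pos : 0 < c₁ := by
    refine hc₁.lt_of_ne fun h₁ => ?_
    have := hfK k₀ hk₀
    rw [← h₁] at this hc₁₂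
    nlinarith
  refine ⟨-c₂ / c₁, div_nonneg (neg_nonneg.mpr hc₂) hc₁_pos.le, fun k hk => ?_⟩
  rw [div_mul_eq_mul_div, div_le_iff₀ hc₁_pos]
  linarith [hfK k hk]

namespace QuadraticMap

variable {V : Type*} [AddCommGroup V] [Module ℝ V]

section Expansion

variable (Q : QuadraticForm ℝ V)

theorem map_smul_add_smul (a b : ℝ) (x y : V) :
    Q (a • x + b • y) = a ^ 2 * Q x + a * b * polar Q x y + b ^ 2 * Q y := by
  rw [QuadraticMap.map_add Q, QuadraticMap.map_smul, QuadraticMap.map_smul, polar_smul_left,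
    polar_smul_right, smul_eq_mul, smul_eq_mul, smul_eq_mul, smul_eq_mul]
  ring

theorem map_add_smul (x y : V) (b : ℝ) :
    Q (x + b • y) = Q x + b * polar Q x y + b ^ 2 * Q y := by
  simpa using map_smul_add_smul Q 1 b x y

theorem map_rotate_add_map_rotate (θ : ℝ) (u v : V) :
    Q (cos θ • u + sin θ • v) + Q (-sin θ • u + cos θ • v) = Q u + Q v := by
  rw [map_smul_add_smul, map_smul_add_smul]
  linear_combination (Q u + Q v) * sin_sq_add_cos_sq θ

theorem exists_map_rotate_eq_zero {u v : V} (h : Q u + Q v = 0) :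
    ∃ θ : ℝ, Q (cos θ • u + sin θ • v) = 0 := by
  have hcont : Continuous fun θ : ℝ => Q (cos θ • u + sin θ • v) := by
    simp only [map_smul_add_smul]
    fun_prop
  have h0 : Q (cos 0 • u + sin 0 • v) = Q u := by simp
  have hπ : Q (cos (π / 2) • u + sin (π / 2) • v) = -Q u := by simp; linarith
  rcases le_total (Q u) 0 with hu | hu
  · exact mem_range_of_exists_le_of_exists_ge hcont ⟨0, h0 ▸ hu⟩ ⟨π / 2, by rw [hπ]; linarith⟩
  · exact mem_range_of_exists_le_of_exists_ge hcont ⟨π / 2, by rw [hπ]; linarith⟩ ⟨0, h0 ▸ hu⟩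

end Expansion

def jointRange (Q₁ Q₂ : QuadraticForm ℝ V) : Set (ℝ × ℝ) :=
  Set.range fun x => (Q₁ x, Q₂ x)

section JointRange

variable (Q₁ Q₂ : QuadraticForm ℝ V)

theorem zero_mem_jointRange : (0 : ℝ × ℝ) ∈ jointRange Q₁ Q₂ := ⟨0, by simp⟩

theorem smul_mem_jointRange {c : ℝ} (hc : 0 ≤ c) {p : ℝ × ℝ} (hp : p ∈ jointRange Q₁ Q₂) :
    c • p ∈ jointRange Q₁ Q₂ := by
  obtain ⟨x, rfl⟩ := hp
  exact ⟨√c • x, by simp [QuadraticMap.map_smul, mul_self_sqrt hc]⟩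

theorem add_mem_jointRange {p q : ℝ × ℝ} (hp : p ∈ jointRange Q₁ Q₂)
    (hq : q ∈ jointRange Q₁ Q₂) : p + q ∈ jointRange Q₁ Q₂ := by
  obtain ⟨u, rfl⟩ := hp
  obtain ⟨v, rfl⟩ := hq
  set c := (Q₁ u, Q₂ u) + (Q₁ v, Q₂ v)
  rcases eq_or_ne c 0 with hc | hc
  · rw [hc]; exact zero_mem_jointRange Q₁ Q₂
  -- `R x = 0` says that `(Q₁ x, Q₂ x)` is parallel to `c`
  set R := c.1 • Q₂ - c.2 • Q₁ with hR
  have parallel_mem : ∀ x, R x = 0 → 0 < c.1 * Q₁ x + c.2 * Q₂ x → c ∈ jointRange Q₁ Q₂ := by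
    intro x hRx hpos
    obtain ⟨μ, hμ, hμc⟩ := Prod.exists_pos_smul_eq_of_cross_eq_zero (y := (Q₁ x, Q₂ x))
      (by simpa [hR, sub_eq_zero] using hRx) hpos
    exact hμc ▸ smul_mem_jointRange Q₁ Q₂ hμ.le ⟨x, rfl⟩
  have hRuv : R u + R v = 0 := by simp [hR, c]; ring
  obtain ⟨θ, hRx₁⟩ := exists_map_rotate_eq_zero R hRuv
  set x₁ := cos θ • u + sin θ • v
  set x₂ := -sin θ • u + cos θ • v
  have hRx₂ : R x₂ = 0 := by linarith [map_rotate_add_map_rotate R θ u v]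
  have hsum : (c.1 * Q₁ x₁ + c.2 * Q₂ x₁) + (c.1 * Q₁ x₂ + c.2 * Q₂ x₂) = c.1 ^ 2 + c.2 ^ 2 := by
    have h₁ : Q₁ x₁ + Q₁ x₂ = c.1 := map_rotate_add_map_rotate Q₁ θ u v
    have h₂ : Q₂ x₁ + Q₂ x₂ = c.2 := map_rotate_add_map_rotate Q₂ θ u v
    linear_combination c.1 * h₁ + c.2 * h₂
  have hc_pos : 0 < c.1 ^ 2 + c.2 ^ 2 := by
    have : c.1 ≠ 0 ∨ c.2 ≠ 0 := by contrapose! hc; exact Prod.ext hc.1 hc.2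
    rcases this with h | h <;> positivity
  by_cases hx₁ : 0 < c.1 * Q₁ x₁ + c.2 * Q₂ x₁
  · exact parallel_mem x₁ hRx₁ hx₁
  · exact parallel_mem x₂ hRx₂ (by linarith)

/-- **Dines' theorem**. -/
theorem convex_jointRange : Convex ℝ (jointRange Q₁ Q₂) :=
  (ConvexCone.mk (jointRange Q₁ Q₂) (fun _ hc _ hp => smul_mem_jointRange Q₁ Q₂ hc.le hp)
    (fun _ hp _ hq => add_mem_jointRange Q₁ Q₂ hp hq)).convex

theorem s_lemma_homogeneous (hslater : ∃ x, 0 < Q₂ x) (h : ∀ x, 0 ≤ Q₂ x → 0 ≤ Q₁ x) :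
    ∃ l : ℝ, 0 ≤ l ∧ ∀ x, l * Q₂ x ≤ Q₁ x := by
  obtain ⟨x₀, hx₀⟩ := hslater
  obtain ⟨l, hl, hK⟩ := (convex_jointRange Q₁ Q₂).exists_nonneg_mul_snd_le_fst
    (zero_mem_jointRange Q₁ Q₂) ⟨_, ⟨x₀, rfl⟩, hx₀⟩ (by rintro _ ⟨x, rfl⟩ hx; exact h x hx.le)
  exact ⟨l, hl, fun x => hK _ ⟨x, rfl⟩⟩

end JointRange

theorem nonneg_imp_nonneg_of_forall_ne_zero (F G : QuadraticForm ℝ V) (φ : V →ₗ[ℝ] ℝ) {z₀ : V}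
    (hGz₀ : 0 < G z₀) (hφz₀ : φ z₀ ≠ 0) (h : ∀ z, φ z ≠ 0 → 0 ≤ G z → 0 ≤ F z)
    {z : V} (hGz : 0 ≤ G z) : 0 ≤ F z := by
  rcases ne_or_eq (φ z) 0 with hφz | hφz
  · exact h z hφz hGz
  -- perturb `z` towards `z₀`, on the side where the cross term of `G` is nonnegative
  obtain ⟨s, hs, hGs⟩ : ∃ s : ℝ, s ≠ 0 ∧ 0 ≤ s * polar G z z₀ := by
    rcases le_total 0 (polar G z z₀) with hp | hp
    exacts [⟨1, one_ne_zero, by simpa⟩, ⟨-1, by norm_num, by simpa⟩]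
  refine nonneg_of_forall_pos_add_mul_add_mul_sq_nonneg (b := s * polar F z z₀)
    (c := s ^ 2 * F z₀) fun ε hε => ?_
  have hF := h (z + (ε * s) • z₀) (by simp [hφz, hφz₀, hs, hε.ne']) ?_
  · rw [map_add_smul] at hF
    linarith
  · rw [map_add_smul]
    nlinarith [mul_nonneg hε.le hGs, mul_nonneg (sq_nonneg (ε * s)) hGz₀.le]

end QuadraticMap

theorem Matrix.toQuadraticForm'_apply {n : Type*} [Fintype n] [DecidableEq n]
    (M : Matrix n n ℝ) (x : n → ℝ) : M.toQuadraticForm' x = x ⬝ᵥ M *ᵥ x := by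
  simp [Matrix.toQuadraticForm', toLinearMap₂'_apply']

section Homogenization

variable {n : Type*}

def homogenization (A : Matrix n n ℝ) (a : n → ℝ) (α : ℝ) :
    Matrix (n ⊕ Fin 1) (n ⊕ Fin 1) ℝ :=
  fromBlocks A (replicateCol (Fin 1) a) (replicateRow (Fin 1) a) (of fun _ _ => α)

theorem isSymm_homogenization {A : Matrix n n ℝ} (hA : A.IsSymm) (a : n → ℝ) (α : ℝ) :
    (homogenization A a α).IsSymm :=
  hA.fromBlocks (transpose_replicateCol a) rfl

theorem homogenization_sub_smul (A B : Matrix n n ℝ) (a b : n → ℝ) (α β l : ℝ) :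
    homogenization (A - l • B) (a - l • b) (α - l * β) =
      homogenization A a α - l • homogenization B b β := by
  ext (i | i) (j | j) <;> simp [homogenization]

variable [Fintype n]

theorem sumElim_one_dotProduct_homogenization_mulVec (A : Matrix n n ℝ) (a u : n → ℝ) (α : ℝ) :
    Sum.elim u 1 ⬝ᵥ homogenization A a α *ᵥ Sum.elim u 1 = u ⬝ᵥ A *ᵥ u + 2 * (a ⬝ᵥ u) + α := by
  simp [homogenization, mulVec, dotProduct, Finset.sum_add_distrib, mul_add, mul_comm]
  ring

theorem homogenization_nonneg_imp_nonneg [DecidableEq n] {A B : Matrix n n ℝ} {a b : n → ℝ}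
    {α β : ℝ} (hslater : ∃ u, 0 < u ⬝ᵥ B *ᵥ u + 2 * (b ⬝ᵥ u) + β)
    (h : ∀ u, 0 ≤ u ⬝ᵥ B *ᵥ u + 2 * (b ⬝ᵥ u) + β → 0 ≤ u ⬝ᵥ A *ᵥ u + 2 * (a ⬝ᵥ u) + α)
    {z : n ⊕ Fin 1 → ℝ} (hz : 0 ≤ (homogenization B b β).toQuadraticForm' z) :
    0 ≤ (homogenization A a α).toQuadraticForm' z := by
  obtain ⟨u₀, hu₀⟩ := hslater
  refine QuadraticMap.nonneg_imp_nonneg_of_forall_ne_zero _ _ (LinearMap.proj (Sum.inr 0))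
    (z₀ := Sum.elim u₀ 1) ?_ (by simp) (fun z ht hGz => ?_) hz
  · rwa [toQuadraticForm'_apply, sumElim_one_dotProduct_homogenization_mulVec]
  set t := z (Sum.inr 0)
  replace ht : t ≠ 0 := ht
  have hz_eq : z = t • Sum.elim (t⁻¹ • (z ∘ Sum.inl)) 1 := by
    ext (i | i)
    · simp [mul_inv_cancel_left₀ ht]
    · simp [t, Subsingleton.elim i 0]
  rw [hz_eq, QuadraticMap.map_smul, toQuadraticForm'_apply,
    sumElim_one_dotProduct_homogenization_mulVec, smul_eq_mul] at hGz ⊢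
  have ht2 : 0 < t * t := mul_self_pos.mpr ht
  exact mul_nonneg ht2.le (h _ (nonneg_of_mul_nonneg_right (by linarith) ht2))

end Homogenization

theorem s_lemma {m : ℕ}
    (A B : Matrix (Fin m) (Fin m) ℝ) (a b : Fin m → ℝ) (α β : ℝ)
    (hA : A.IsSymm) (hB : B.IsSymm)
    (slater : ∃ u : Fin m → ℝ, 0 < u ⬝ᵥ (B *ᵥ u) + 2 * (b ⬝ᵥ u) + β) :
    (∀ u : Fin m → ℝ, 0 ≤ u ⬝ᵥ (B *ᵥ u) + 2 * (b ⬝ᵥ u) + β →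
        0 ≤ u ⬝ᵥ (A *ᵥ u) + 2 * (a ⬝ᵥ u) + α) ↔
    ∃ l : ℝ, 0 ≤ l ∧
      (Matrix.fromBlocks (A - l • B) (Matrix.replicateCol (Fin 1) (a - l • b))
        (Matrix.replicateRow (Fin 1) (a - l • b))
        (Matrix.of fun _ _ => α - l * β)).PosSemidef := by
  change _ ↔ ∃ l : ℝ, 0 ≤ l ∧ (homogenization (A - l • B) (a - l • b) (α - l * β)).PosSemidef
  simp only [homogenization_sub_smul, posSemidef_iff_dotProduct_mulVec, star_trivial, sub_mulVec,
    smul_mulVec, dotProduct_sub, dotProduct_smul, smul_eq_mul, sub_nonneg]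
  constructor
  · intro h
    obtain ⟨u₀, hu₀⟩ := slater
    obtain ⟨l, hl, hlA⟩ := QuadraticMap.s_lemma_homogeneous
      (homogenization A a α).toQuadraticForm' (homogenization B b β).toQuadraticForm'
      ⟨Sum.elim u₀ 1, by rwa [toQuadraticForm'_apply, sumElim_one_dotProduct_homogenization_mulVec]⟩
      fun z => homogenization_nonneg_imp_nonneg ⟨u₀, hu₀⟩ h
    refine ⟨l, hl, isHermitian_iff_isSymm.mpr
      ((isSymm_homogenization hA a α).sub ((isSymm_homogenization hB b β).smul l)), fun z => ?_⟩
    simpa [toQuadraticForm'_apply] using hlA z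
  · rintro ⟨l, hl, -, hpsd⟩ u hu
    have := hpsd (Sum.elim u 1)
    rw [sumElim_one_dotProduct_homogenization_mulVec,
      sumElim_one_dotProduct_homogenization_mulVec] at this
    nlinarith [mul_nonneg hl hu]
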